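/- arXiv:1901.08434 — 3 statements merged into one kernel-verified Lean document; each statement's English description precedes it below -/
import Mathlib

section
/- Let (X_t)_{t≥1} be an i.i.d. sequence of nonnegative integrable real-valued random variables, let ν > 0 and γ > 1 satisfy P(X_1 ≥ ν) = 1/γ, and set β = E[X_1·1{X_1 ≥ ν}]. Then for every stopping time T of the natural filtration of (X_t) with γ ≤ E[T] < ∞, one has E[X_T] ≤ β·E[T]. -/
open MeasureTheory ProbabilityTheory
open scoped ENNReal

/-! Since `x ≤ ν + (x - ν)⁺`, we have `X_T ≤ ν + ∑_{t < T} (X_{t+1} - ν)⁺`. The event `{t < T}` is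
`𝓕_t`-measurable, hence independent of `X_{t+1}`, so by Wald's argument the sum has expectation
`E[T] · E[(X_1 - ν)⁺] = E[T] · (β - ν/γ)`. Hence `E[X_T] ≤ ν + E[T] (β - ν/γ) ≤ β E[T]`, the last
step being exactly `γ ≤ E[T]`. Working with `ℝ≥0∞`-valued integrals makes the exchange of sum and
expectation free of integrability side conditions. -/

/-- The natural filtration `𝓕_t = σ(X_1, …, X_t)` of a process indexed from `1`. -/
def natFiltration {Ω : Type*} [MeasurableSpace Ω] (X : ℕ → Ω → ℝ) (t : ℕ) :
    MeasurableSpace Ω :=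
  ⨆ s ∈ Set.Icc 1 t, MeasurableSpace.comap (X s) inferInstance

theorem integral_le_toReal_lintegral_ofReal {α : Type*} [MeasurableSpace α] {μ : Measure α}
    (f : α → ℝ) : ∫ a, f a ∂μ ≤ (∫⁻ a, ENNReal.ofReal (f a) ∂μ).toReal := by
  by_cases hf : Integrable f μ
  · rw [integral_eq_lintegral_pos_part_sub_lintegral_neg_part hf]
    exact sub_le_self _ ENNReal.toReal_nonneg
  · rw [integral_undef hf]
    exact ENNReal.toReal_nonneg

theorem lintegral_ofReal_sub_eq {α : Type*} [MeasurableSpace α] {μ : Measure α}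
    [IsFiniteMeasure μ] {Y : α → ℝ} (hY : Measurable Y) (hYi : Integrable Y μ) (ν : ℝ) :
    ∫⁻ a, ENNReal.ofReal (Y a - ν) ∂μ =
      ENNReal.ofReal ((∫ a in {a | ν ≤ Y a}, Y a ∂μ) - ν * μ.real {a | ν ≤ Y a}) := by
  set A := {a | ν ≤ Y a}
  have hA : MeasurableSet A := measurableSet_le measurable_const hY
  have hsupp : (fun a => ENNReal.ofReal (Y a - ν)) =
      A.indicator fun a => ENNReal.ofReal (Y a - ν) := by
    ext a
    by_cases h : ν ≤ Y a
    · simp [A, h]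
    · simp [A, h, le_of_lt (not_le.mp h)]
  have hconst : IntegrableOn (fun _ => ν) A μ := integrableOn_const (measure_ne_top μ _)
  have hsub : IntegrableOn (fun a => Y a - ν) A μ := hYi.integrableOn.sub hconst
  rw [hsupp, lintegral_indicator hA, ← ofReal_integral_eq_lintegral_ofReal hsub
    ((ae_restrict_iff' hA).mpr (Filter.Eventually.of_forall fun a ha => sub_nonneg.mpr ha)),
    integral_sub hYi.integrableOn hconst, setIntegral_const, smul_eq_mul, mul_comm]

theorem tsum_measure_lt_eq_lintegral {α : Type*} [MeasurableSpace α] (μ : Measure α)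
    {N : α → ℕ} (hN : Measurable N) :
    ∑' t : ℕ, μ {a | t < N a} = ∫⁻ a, (N a : ℝ≥0∞) ∂μ := by
  have hmeas (t : ℕ) : MeasurableSet {a | t < N a} := measurableSet_lt measurable_const hN
  calc ∑' t : ℕ, μ {a | t < N a}
      = ∑' t : ℕ, ∫⁻ a, {a | t < N a}.indicator 1 a ∂μ := by
        simp_rw [lintegral_indicator_one (hmeas _)]
    _ = ∫⁻ a, ∑' t : ℕ, {a | t < N a}.indicator 1 a ∂μ :=
        (lintegral_tsum fun t => (measurable_const.indicator (hmeas t)).aemeasurable).symm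
    _ = ∫⁻ a, (N a : ℝ≥0∞) ∂μ := lintegral_congr fun a => by
        simp +contextual [Set.indicator_apply, tsum_eq_sum (s := Finset.range (N a)),
          Finset.filter_true_of_mem]

section NatFiltration

variable {Ω : Type*} [mΩ : MeasurableSpace Ω] {X : ℕ → Ω → ℝ}

theorem natFiltration_mono (X : ℕ → Ω → ℝ) : Monotone (natFiltration X) :=
  fun _ _ hst => biSup_mono fun _ hs => ⟨hs.1, hs.2.trans hst⟩

theorem natFiltration_le (hmeas : ∀ t, 1 ≤ t → Measurable (X t)) (t : ℕ) :
    natFiltration X t ≤ mΩ :=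
  iSup₂_le fun s hs => (hmeas s hs.1).comap_le

theorem measurableSet_natFiltration_lt {T : Ω → ℕ}
    (hT : ∀ t, MeasurableSet[natFiltration X t] {ω | T ω = t}) (t : ℕ) :
    MeasurableSet[natFiltration X t] {ω | t < T ω} := by
  have h : {ω | t < T ω} = (⋃ s ≤ t, {ω | T ω = s})ᶜ := by
    ext ω
    simp only [Set.mem_ofPred_eq, Set.mem_compl_iff, Set.mem_iUnion, exists_prop, not_exists,
      not_and]
    exact ⟨fun h s hs hTs => by omega, fun h => not_le.mp fun h' => h _ h' rfl⟩
  rw [h]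
  exact (MeasurableSet.iUnion fun s => MeasurableSet.iUnion fun hs =>
    natFiltration_mono X hs _ (hT s)).compl

theorem indep_natFiltration_comap_succ {P : Measure Ω}
    (hmeas : ∀ t, 1 ≤ t → Measurable (X t))
    (hindep : iIndepFun (fun i : {n : ℕ // 1 ≤ n} => X i.1) P) (t : ℕ) :
    Indep (natFiltration X t) (MeasurableSpace.comap (X (t + 1)) inferInstance) P := by
  have h := indep_biSup_compl
    (s := fun i : {n : ℕ // 1 ≤ n} => MeasurableSpace.comap (X i.1) inferInstance)
    (fun i => (hmeas i.1 i.2).comap_le) hindep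
    {i : {n : ℕ // 1 ≤ n} | i.1 ≤ t}
  refine indep_of_indep_of_le_right (indep_of_indep_of_le_left h ?_) ?_
  · exact iSup₂_le fun s hs => le_iSup₂_of_le (f := fun (i : {n : ℕ // 1 ≤ n}) _ =>
      MeasurableSpace.comap (X i.1) inferInstance) ⟨s, hs.1⟩ hs.2 le_rfl
  · exact le_iSup₂_of_le (f := fun (i : {n : ℕ // 1 ≤ n}) _ =>
      MeasurableSpace.comap (X i.1) inferInstance) ⟨t + 1, by omega⟩ (by simp) le_rfl

variable {P : Measure Ω}

theorem lintegral_indicator_comp_succ_eq_measure_mul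
    (hmeas : ∀ t, 1 ≤ t → Measurable (X t))
    (hindep : iIndepFun (fun i : {n : ℕ // 1 ≤ n} => X i.1) P)
    (hident : ∀ t, 1 ≤ t → IdentDistrib (X t) (X 1) P P)
    {t : ℕ} {s : Set Ω} (hs : MeasurableSet[natFiltration X t] s)
    {f : ℝ → ℝ≥0∞} (hf : Measurable f) :
    ∫⁻ ω, s.indicator (fun ω => f (X (t + 1) ω)) ω ∂P = P s * ∫⁻ ω, f (X 1 ω) ∂P := by
  calc ∫⁻ ω, s.indicator (fun ω => f (X (t + 1) ω)) ω ∂P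
      = ∫⁻ ω, s.indicator 1 ω * f (X (t + 1) ω) ∂P := by
        congr 1
        ext ω
        by_cases hω : ω ∈ s <;> simp [hω]
    _ = (∫⁻ ω, s.indicator 1 ω ∂P) * ∫⁻ ω, f (X (t + 1) ω) ∂P :=
        lintegral_mul_eq_lintegral_mul_lintegral_of_independent_measurableSpace
          (natFiltration_le hmeas t) (hmeas (t + 1) (by omega)).comap_le
          (indep_natFiltration_comap_succ hmeas hindep t)
          (measurable_const.indicator hs) (hf.comp (comap_measurable (X (t + 1))))
    _ = P s * ∫⁻ ω, f (X 1 ω) ∂P := by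
        rw [lintegral_indicator_one (natFiltration_le hmeas t _ hs)]
        exact congrArg _ ((hident (t + 1) (by omega)).comp hf).lintegral_eq

theorem lintegral_tsum_indicator_comp_succ_eq
    (hmeas : ∀ t, 1 ≤ t → Measurable (X t))
    (hindep : iIndepFun (fun i : {n : ℕ // 1 ≤ n} => X i.1) P)
    (hident : ∀ t, 1 ≤ t → IdentDistrib (X t) (X 1) P P)
    {T : Ω → ℕ} (hT : ∀ t, MeasurableSet[natFiltration X t] {ω | T ω = t})
    {f : ℝ → ℝ≥0∞} (hf : Measurable f) :
    ∫⁻ ω, ∑' t : ℕ, {ω | t < T ω}.indicator (fun ω => f (X (t + 1) ω)) ω ∂P =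
      (∫⁻ ω, (T ω : ℝ≥0∞) ∂P) * ∫⁻ ω, f (X 1 ω) ∂P := by
  have hTm : Measurable T := measurable_to_countable' fun t => natFiltration_le hmeas t _ (hT t)
  have hterm (t : ℕ) : Measurable ({ω | t < T ω}.indicator fun ω => f (X (t + 1) ω)) :=
    (hf.comp (hmeas (t + 1) (by omega))).indicator
      (natFiltration_le hmeas t _ (measurableSet_natFiltration_lt hT t))
  rw [lintegral_tsum fun t => (hterm t).aemeasurable]
  simp_rw [lintegral_indicator_comp_succ_eq_measure_mul hmeas hindep hident
    (measurableSet_natFiltration_lt hT _) hf]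
  rw [ENNReal.tsum_mul_right, tsum_measure_lt_eq_lintegral P hTm]

end NatFiltration

theorem ofReal_le_ofReal_add_tsum_indicator {Ω : Type*} (X : ℕ → Ω → ℝ) (ν : ℝ)
    {T : Ω → ℕ} {ω : Ω} (hT : 1 ≤ T ω) :
    ENNReal.ofReal (X (T ω) ω) ≤ ENNReal.ofReal ν +
      ∑' t : ℕ, {ω | t < T ω}.indicator (fun ω => ENNReal.ofReal (X (t + 1) ω - ν)) ω := by
  obtain ⟨k, hk⟩ : ∃ k, T ω = k + 1 := ⟨T ω - 1, by omega⟩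
  calc ENNReal.ofReal (X (T ω) ω)
      = ENNReal.ofReal (ν + (X (k + 1) ω - ν)) := by rw [hk, add_sub_cancel]
    _ ≤ ENNReal.ofReal ν + ENNReal.ofReal (X (k + 1) ω - ν) := ENNReal.ofReal_add_le
    _ ≤ _ := by
        gcongr
        refine le_of_eq_of_le ?_ (ENNReal.le_tsum k)
        rw [Set.indicator_of_mem (by simp [hk])]

theorem lintegral_ofReal_comp_le_add_mul {Ω : Type*} [MeasurableSpace Ω] {P : Measure Ω}
    [IsProbabilityMeasure P] {X : ℕ → Ω → ℝ}
    (hmeas : ∀ t, 1 ≤ t → Measurable (X t))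
    (hindep : iIndepFun (fun i : {n : ℕ // 1 ≤ n} => X i.1) P)
    (hident : ∀ t, 1 ≤ t → IdentDistrib (X t) (X 1) P P)
    {T : Ω → ℕ} (hT1 : ∀ ω, 1 ≤ T ω)
    (hT : ∀ t, MeasurableSet[natFiltration X t] {ω | T ω = t}) (ν : ℝ) :
    ∫⁻ ω, ENNReal.ofReal (X (T ω) ω) ∂P ≤
      ENNReal.ofReal ν + (∫⁻ ω, (T ω : ℝ≥0∞) ∂P) * ∫⁻ ω, ENNReal.ofReal (X 1 ω - ν) ∂P := by
  calc ∫⁻ ω, ENNReal.ofReal (X (T ω) ω) ∂P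
      ≤ ∫⁻ ω, ENNReal.ofReal ν + ∑' t : ℕ, {ω | t < T ω}.indicator
          (fun ω => ENNReal.ofReal (X (t + 1) ω - ν)) ω ∂P :=
        lintegral_mono fun ω => ofReal_le_ofReal_add_tsum_indicator X ν (hT1 ω)
    _ = _ := by
        rw [lintegral_add_left measurable_const, lintegral_const, measure_univ, mul_one,
          lintegral_tsum_indicator_comp_succ_eq hmeas hindep hident hT
            (f := fun x => ENNReal.ofReal (x - ν)) (by fun_prop)]

theorem stmt_0_general
    {Ω : Type*} [MeasurableSpace Ω] (P : Measure Ω) [IsProbabilityMeasure P]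
    (X : ℕ → Ω → ℝ)
    (hmeas : ∀ t, 1 ≤ t → Measurable (X t))
    (hindep : iIndepFun
      (fun i : {n : ℕ // 1 ≤ n} => X i.1) P)
    (hident : ∀ t, 1 ≤ t → IdentDistrib (X t) (X 1) P P)
    (hint : ∀ t, 1 ≤ t → Integrable (X t) P)
    (ν γ : ℝ) (hν : 0 < ν) (hγ : 1 < γ)
    (hthresh : P {ω | ν ≤ X 1 ω} = ENNReal.ofReal (1 / γ))
    (T : Ω → ℕ)
    (hT1 : ∀ ω, 1 ≤ T ω)
    (hTstop : ∀ t, MeasurableSet[natFiltration X t] {ω | T ω = t})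
    (hTint : Integrable (fun ω => (T ω : ℝ)) P)
    (hTγ : γ ≤ ∫ ω, (T ω : ℝ) ∂P) :
    ∫ ω, X (T ω) ω ∂P ≤ (∫ ω in {ω | ν ≤ X 1 ω}, X 1 ω ∂P) * ∫ ω, (T ω : ℝ) ∂P := by
  set A := {ω | ν ≤ X 1 ω}
  set β := ∫ ω in A, X 1 ω ∂P
  set τ := ∫ ω, (T ω : ℝ) ∂P
  have hA : MeasurableSet A := measurableSet_le measurable_const (hmeas 1 le_rfl)
  have hPA : P.real A = 1 / γ := by
    rw [measureReal_def, hthresh, ENNReal.toReal_ofReal (by positivity)]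
  have hτ : ∫⁻ ω, (T ω : ℝ≥0∞) ∂P = ENNReal.ofReal τ := by
    rw [ofReal_integral_eq_lintegral_ofReal hTint (ae_of_all _ fun ω => Nat.cast_nonneg _)]
    simp_rw [ENNReal.ofReal_natCast]
  have hβ : ν * (1 / γ) ≤ β := by
    rw [← hPA]
    exact setIntegral_ge_of_const_le_real hA (measure_ne_top P A) (fun ω hω => hω)
      (hint 1 le_rfl).integrableOn
  have hbound : ν + τ * (β - ν * (1 / γ)) ≤ β * τ := by
    have : ν ≤ τ * (ν * (1 / γ)) := by
      calc ν = γ * (ν * (1 / γ)) := by field_simp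
        _ ≤ τ * (ν * (1 / γ)) := by gcongr
    linarith
  have hlintegral : ∫⁻ ω, ENNReal.ofReal (X (T ω) ω) ∂P ≤ ENNReal.ofReal (β * τ) := by
    refine (lintegral_ofReal_comp_le_add_mul hmeas hindep hident hT1 hTstop ν).trans ?_
    rw [hτ, lintegral_ofReal_sub_eq (hmeas 1 le_rfl) (hint 1 le_rfl), hPA,
      ← ENNReal.ofReal_mul (by positivity), ← ENNReal.ofReal_add hν.le (by nlinarith)]
    exact ENNReal.ofReal_le_ofReal hbound
  calc ∫ ω, X (T ω) ω ∂P
      ≤ (∫⁻ ω, ENNReal.ofReal (X (T ω) ω) ∂P).toReal := integral_le_toReal_lintegral_ofReal _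
    _ ≤ (ENNReal.ofReal (β * τ)).toReal := ENNReal.toReal_mono ENNReal.ofReal_ne_top hlintegral
    _ = β * τ := ENNReal.toReal_ofReal (by nlinarith)

/-- If `(X_t)_{t≥1}` is an i.i.d. sequence of nonnegative integrable random variables,
`ν > 0` and `γ > 1` satisfy `P(X_1 ≥ ν) = 1/γ`, and `β = E[X_1·1{X_1 ≥ ν}]`, then every
stopping time `T` of the natural filtration with `γ ≤ E[T] < ∞` satisfies
`E[X_T] ≤ β·E[T]`. -/
theorem stmt_0
    {Ω : Type*} [MeasurableSpace Ω] (P : Measure Ω) [IsProbabilityMeasure P]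
    (X : ℕ → Ω → ℝ)
    (hmeas : ∀ t, 1 ≤ t → Measurable (X t))
    (hindep : iIndepFun
      (fun i : {n : ℕ // 1 ≤ n} => X i.1) P)
    (hident : ∀ t, 1 ≤ t → IdentDistrib (X t) (X 1) P P)
    (hnonneg : ∀ t, 1 ≤ t → ∀ ω, 0 ≤ X t ω)
    (hint : ∀ t, 1 ≤ t → Integrable (X t) P)
    (ν γ : ℝ) (hν : 0 < ν) (hγ : 1 < γ)
    (hthresh : P {ω | ν ≤ X 1 ω} = ENNReal.ofReal (1 / γ))
    (T : Ω → ℕ)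
    (hT1 : ∀ ω, 1 ≤ T ω)
    (hTstop : ∀ t, MeasurableSet[natFiltration X t] {ω | T ω = t})
    (hTint : Integrable (fun ω => (T ω : ℝ)) P)
    (hTγ : γ ≤ ∫ ω, (T ω : ℝ) ∂P) :
    ∫ ω, X (T ω) ω ∂P ≤ (∫ ω in {ω | ν ≤ X 1 ω}, X 1 ω ∂P) * ∫ ω, (T ω : ℝ) ∂P :=
  stmt_0_general P X hmeas hindep hident hint ν γ hν hγ hthresh T hT1 hTstop hTint hTγ
end

section
/- Let 0 < |α| < 1, σ > 0, μ ∈ ℝ and ν ≥ 0. Then inf_{z ∈ ℝ} N((1−α)μ + αz, 1+σ²)({x ∈ ℝ : |x + μ(1−α²)/σ²| ≥ ν}) = 2Φ(−ν/√(1+σ²)), where Φ is the standard normal cumulative distribution function. -/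
open MeasureTheory ProbabilityTheory

/-- The standard normal cumulative distribution function `Φ`. -/
noncomputable def stdNormalCDF (y : ℝ) : ℝ :=
  ((gaussianReal 0 1) (Set.Iic y)).toReal

/-!
Write `m = (1 - α)μ + αz`, `c = μ(1 - α²)/σ²` and `v = 1 + σ²`. After the shift `x ↦ x - m`
the probability is the `N(0, v)`-mass of the complement of an interval of half-width `ν` centred
at `-(m + c)`. As the Gaussian density is even and decreasing
in `|x|`, an interval of fixed length has the largest mass when centred at `0`, and since `α ≠ 0`
some state `z` realises this centring. The centred tail is `2Φ(-ν/√v)` by symmetry and scaling.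
-/

open Set NNReal

theorem intervalIntegral_shift_le_of_abs_antitone {f : ℝ → ℝ} (hf : Continuous f)
    (hmono : ∀ x y, |x| ≤ |y| → f y ≤ f x) {h : ℝ} (hh : 0 ≤ h) (t : ℝ) :
    ∫ x in (t - h)..(t + h), f x ≤ ∫ x in (-h)..h, f x := by
  have hint : ∀ a b, IntervalIntegrable f volume a b := hf.intervalIntegrable
  have of_nonneg : ∀ t, 0 ≤ t → ∫ x in (t - h)..(t + h), f x ≤ ∫ x in (-h)..h, f x := by
    intro t ht
    -- `[-h, h]` gains `[-h, t - h]` and loses its translate by `2h`, which lies farther from `0`.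
    have hsplit := intervalIntegral.integral_interval_sub_interval_comm
      (hint (-h) h) (hint (t - h) (t + h)) (hint (-h) (t - h))
    have hshift : ∫ x in h..(t + h), f x = ∫ x in (-h)..(t - h), f (x + 2 * h) := by
      rw [intervalIntegral.integral_comp_add_right]; congr 1 <;> ring
    have hfarther : ∫ x in (-h)..(t - h), f (x + 2 * h) ≤ ∫ x in (-h)..(t - h), f x := by
      refine intervalIntegral.integral_mono_on (by linarith)
        ((hf.comp (continuous_add_const _)).intervalIntegrable _ _) (hint _ _) fun x hx => ?_
      refine hmono _ _ ?_
      rw [abs_of_nonneg (a := x + 2 * h) (by linarith [hx.1]), abs_le]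
      constructor <;> linarith [hx.1]
    linarith
  rcases le_total 0 t with ht | ht
  · exact of_nonneg t ht
  · have heven : ∀ x, f (-x) = f x := fun x =>
      le_antisymm (hmono _ _ (abs_neg x).ge) (hmono _ _ (abs_neg x).le)
    calc ∫ x in (t - h)..(t + h), f x = ∫ x in (t - h)..(t + h), f (-x) := by simp_rw [heven]
      _ = ∫ x in (-(t + h))..(-(t - h)), f x := intervalIntegral.integral_comp_neg _
      _ = ∫ x in (-t - h)..(-t + h), f x := by congr 1 <;> ring
      _ ≤ _ := of_nonneg (-t) (by linarith)

theorem continuous_gaussianPDFReal (μ : ℝ) (v : ℝ≥0) : Continuous (gaussianPDFReal μ v) := by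
  rw [gaussianPDFReal_def]; fun_prop

theorem gaussianPDFReal_zero_le_of_abs_le (v : ℝ≥0) {x y : ℝ} (hxy : |x| ≤ |y|) :
    gaussianPDFReal 0 v y ≤ gaussianPDFReal 0 v x := by
  simp only [gaussianPDFReal_def, sub_zero]
  have := sq_le_sq.2 hxy
  gcongr

theorem gaussianReal_Ioo (μ : ℝ) {v : ℝ≥0} (hv : v ≠ 0) {a b : ℝ} (hab : a ≤ b) :
    gaussianReal μ v (Ioo a b) = ENNReal.ofReal (∫ x in a..b, gaussianPDFReal μ v x) := by
  rw [gaussianReal_apply_eq_integral μ hv, intervalIntegral.integral_of_le hab,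
    integral_Ioc_eq_integral_Ioo]

theorem gaussianReal_Ioo_le_Ioo_centered {v : ℝ≥0} (hv : v ≠ 0) {h : ℝ} (hh : 0 ≤ h) (t : ℝ) :
    gaussianReal 0 v (Ioo (t - h) (t + h)) ≤ gaussianReal 0 v (Ioo (-h) h) := by
  rw [gaussianReal_Ioo 0 hv (by linarith), gaussianReal_Ioo 0 hv (by linarith)]
  exact ENNReal.ofReal_le_ofReal <| intervalIntegral_shift_le_of_abs_antitone
    (continuous_gaussianPDFReal 0 v) (fun _ _ => gaussianPDFReal_zero_le_of_abs_le v) hh t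

theorem gaussianReal_setOf_le_abs_le_abs_add {v : ℝ≥0} (hv : v ≠ 0) {h : ℝ} (hh : 0 ≤ h)
    (t : ℝ) :
    gaussianReal 0 v {y | h ≤ |y|} ≤ gaussianReal 0 v {y | h ≤ |y + t|} := by
  have hcompl : ∀ t : ℝ, {y : ℝ | h ≤ |y + t|} = (Ioo (-t - h) (-t + h))ᶜ := by
    intro t; ext y
    simp only [mem_ofPred_eq, mem_compl_iff, mem_Ioo, not_and_or, not_lt, le_abs']
    constructor <;> rintro (_ | _) <;> first | (left; linarith) | (right; linarith)
  have hcompl₀ : {y : ℝ | h ≤ |y|} = (Ioo (-h) h)ᶜ := by simpa using hcompl 0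
  rw [hcompl₀, hcompl, prob_compl_eq_one_sub measurableSet_Ioo,
    prob_compl_eq_one_sub measurableSet_Ioo]
  exact tsub_le_tsub_left (gaussianReal_Ioo_le_Ioo_centered hv hh (-t)) 1

theorem gaussianReal_setOf_le_abs {v : ℝ≥0} (hv : v ≠ 0) {h : ℝ} (hh : 0 ≤ h) :
    gaussianReal 0 v {y | h ≤ |y|} = 2 * gaussianReal 0 v (Iic (-h)) := by
  have := nullSingletonClass_gaussianReal (μ := 0) hv
  have hunion : {y : ℝ | h ≤ |y|} = Iic (-h) ∪ Ici h := by
    ext y; simp only [mem_ofPred_eq, mem_union, mem_Iic, mem_Ici, le_abs']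
  have hnull : AEDisjoint (gaussianReal 0 v) (Iic (-h)) (Ici h) := by
    refine measure_mono_null (fun y hy => ?_) (measure_singleton (0 : ℝ))
    simp only [mem_inter_iff, mem_Iic, mem_Ici] at hy
    exact le_antisymm (by linarith [hy.1]) (by linarith [hy.2])
  have hsymm : gaussianReal 0 v (Ici h) = gaussianReal 0 v (Iic (-h)) := by
    conv_lhs => rw [← neg_zero, ← gaussianReal_map_neg]
    rw [Measure.map_apply measurable_neg measurableSet_Ici]
    congr 1; ext y; simp
  rw [hunion, measure_union₀ measurableSet_Ici.nullMeasurableSet hnull, hsymm, two_mul]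

theorem gaussianReal_Iic_eq_stdNormalCDF {v : ℝ≥0} (hv : v ≠ 0) (a : ℝ) :
    (gaussianReal 0 v (Iic a)).toReal = stdNormalCDF (a / √v) := by
  have hs : 0 < √(v : ℝ) := Real.sqrt_pos.2 (by positivity)
  have hmap : (gaussianReal 0 1).map (√(v : ℝ) * ·) = gaussianReal 0 v := by
    rw [gaussianReal_map_const_mul, mul_zero]
    congr 1; ext; simp [Real.sq_sqrt v.coe_nonneg]
  rw [← hmap, Measure.map_apply (measurable_const_mul _) measurableSet_Iic, stdNormalCDF]
  congr 3; ext y; simp [le_div_iff₀ hs, mul_comm]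

theorem gaussianReal_setOf_le_abs_add (m c ν : ℝ) (v : ℝ≥0) :
    gaussianReal m v {x | ν ≤ |x + c|} = gaussianReal 0 v {y | ν ≤ |y + (m + c)|} := by
  conv_lhs => rw [← zero_add m, ← gaussianReal_map_add_const]
  rw [Measure.map_apply (measurable_add_const m)
    (measurableSet_le measurable_const (by fun_prop))]
  simp only [preimage_ofPred_eq, add_assoc]

theorem stmt_14_general (α σ μ ν : ℝ) (hα0 : 0 < |α|) (hν : 0 ≤ ν) :
    ⨅ z : ℝ, ((gaussianReal ((1 - α) * μ + α * z) ((1 + σ ^ 2).toNNReal))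
        {x : ℝ | ν ≤ |x + μ * (1 - α ^ 2) / σ ^ 2|}).toReal
      = 2 * stdNormalCDF (-ν / Real.sqrt (1 + σ ^ 2)) := by
  have hα : α ≠ 0 := abs_pos.1 hα0
  have hv : (1 + σ ^ 2).toNNReal ≠ 0 := (Real.toNNReal_pos.2 (by positivity)).ne'
  have hsqrt : √(1 + σ ^ 2) = √((1 + σ ^ 2).toNNReal : ℝ) := by
    rw [Real.coe_toNNReal _ (by positivity)]
  rw [hsqrt, ← gaussianReal_Iic_eq_stdNormalCDF hv, ← ENNReal.toReal_ofNat,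
    ← ENNReal.toReal_mul, ← gaussianReal_setOf_le_abs hv hν]
  simp_rw [fun z : ℝ => gaussianReal_setOf_le_abs_add ((1 - α) * μ + α * z)]
  obtain ⟨z₀, hz₀⟩ : ∃ z, (1 - α) * μ + α * z + μ * (1 - α ^ 2) / σ ^ 2 = 0 :=
    ⟨-(μ * (1 - α ^ 2) / σ ^ 2 + (1 - α) * μ) / α, by field_simp; ring⟩
  refine IsGLB.ciInf_eq (IsLeast.isGLB ⟨⟨z₀, ?_⟩, ?_⟩)
  · simp_rw [hz₀, add_zero]
  · rintro _ ⟨z, rfl⟩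
    exact ENNReal.toReal_mono (measure_ne_top _ _) (gaussianReal_setOf_le_abs_le_abs_add hv hν _)

/-- Worst-case (over the Markov state `z`) detection probability of the mismatched
Shewhart test `𝒮₁`: for `0 < |α| < 1`, `σ > 0`, `μ ∈ ℝ` and `ν ≥ 0`,
`inf_z N((1−α)μ + αz, 1+σ²)({x : |x + μ(1−α²)/σ²| ≥ ν}) = 2Φ(−ν/√(1+σ²))`. -/
theorem stmt_14 (α σ μ ν : ℝ) (hα0 : 0 < |α|) (hα1 : |α| < 1) (hσ : 0 < σ) (hν : 0 ≤ ν) :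
    ⨅ z : ℝ, ((gaussianReal ((1 - α) * μ + α * z) ((1 + σ ^ 2).toNNReal))
        {x : ℝ | ν ≤ |x + μ * (1 - α ^ 2) / σ ^ 2|}).toReal
      = 2 * stdNormalCDF (-ν / Real.sqrt (1 + σ ^ 2)) :=
  stmt_14_general α σ μ ν hα0 hν
end

section
/- Let (ξ_t)_{t≥1} be an i.i.d. sequence of real-valued random variables, let L : ℝ → [0,∞) be measurable with E[L(ξ_1)] < ∞, and let γ > 1 and ν > 0 satisfy P(L(ξ_1) ≥ ν) = 1/γ; set β = E[L(ξ_1)·1{L(ξ_1) ≥ ν}]. Then: (a) every stopping time T of the natural filtration with γ ≤ E[T] < ∞ and P(T > t) > 0 for all t ≥ 0 satisfies inf_{t≥0} E[L(ξ_{t+1})·1{T = t+1}]/P(T > t) ≤ β; and (b) the Shewhart stopping time S = inf{t ≥ 1 : L(ξ_t) ≥ ν} satisfies E[S] = γ and E[L(ξ_{t+1})·1{S = t+1}]/P(S > t) = β for every t ≥ 0. -/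
/-!
Write `p = P(L(ξ_1) ≥ ν) = 1/γ` and `b_t = P(T > t)`. The event `{T > t}` lies in `𝓕_t`, which
is independent of `ξ_{t+1}`; so among the events `B ⊆ {T > t}`, the integral of `L(ξ_{t+1}) - ν`
over `B` is largest for `B = {T > t} ∩ {L(ξ_{t+1}) ≥ ν}`, where it equals `b_t (β - ν p)`. If every
ratio exceeded `β`, this would force `P(T = t + 1) > p b_t`, i.e. `b_{t+1} < (1 - p) b_t`, and then
`E[T] = ∑ b_t < ∑ (1 - p)^t = γ`.

For the Shewhart rule, `{S > t}` is, up to a null set, the event that none of `ξ_1, …, ξ_t`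
crossed the threshold, so `P(S > t) = (1 - p)^t` and `E[S] = γ`; and `{S = t + 1}` is that event
intersected with `{L(ξ_{t+1}) ≥ ν}`, on which `L(ξ_{t+1})` integrates to `(1 - p)^t β`.
-/

open MeasureTheory ProbabilityTheory
open scoped ENNReal

/-- The Shewhart stopping time `S = inf{t ≥ 1 : L(ξ_t) ≥ ν}` (with junk value `0` if the
threshold is never crossed, an event of probability zero when `P(L(ξ_1) ≥ ν) > 0`). -/
noncomputable def shewhart {Ω : Type*} (ξ : ℕ → Ω → ℝ) (L : ℝ → ℝ) (ν : ℝ) (ω : Ω) : ℕ :=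
  sInf {t : ℕ | 1 ≤ t ∧ ν ≤ L (ξ t ω)}

section TailSum

variable {Ω : Type*} [MeasurableSpace Ω] {μ : Measure Ω}

theorem lintegral_natCast_eq_tsum_measure {f : Ω → ℕ} (hf : Measurable f) :
    ∫⁻ ω, (f ω : ℝ≥0∞) ∂μ = ∑' t : ℕ, μ {ω | t < f ω} := by
  have hmeas (t : ℕ) : MeasurableSet {ω | t < f ω} := hf measurableSet_Ioi
  have hsum (ω : Ω) : (f ω : ℝ≥0∞) = ∑' t : ℕ, {ω | t < f ω}.indicator 1 ω := by
    rw [tsum_eq_sum (s := Finset.range (f ω)) fun t ht => by simpa using ht]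
    simp [Set.indicator_apply, Finset.filter_true_of_mem fun t ht => Finset.mem_range.1 ht]
  simp_rw [hsum]
  rw [lintegral_tsum fun t => (measurable_one.indicator (hmeas t)).aemeasurable]
  congr 1 with t
  exact lintegral_indicator_one (hmeas t)

theorem integral_natCast_eq_tsum_measureReal [IsFiniteMeasure μ] {f : Ω → ℕ}
    (hf : Measurable f) : ∫ ω, (f ω : ℝ) ∂μ = ∑' t : ℕ, μ.real {ω | t < f ω} := by
  rw [integral_eq_lintegral_of_nonneg_ae (.of_forall fun ω => Nat.cast_nonneg _)
    (measurable_from_top.comp hf).aestronglyMeasurable]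
  simp only [ENNReal.ofReal_natCast]
  rw [lintegral_natCast_eq_tsum_measure hf, ENNReal.tsum_toReal_eq fun t => measure_ne_top μ _]
  rfl

theorem measureReal_lt_eq_add [IsFiniteMeasure μ] {f : Ω → ℕ} (hf : Measurable f) (t : ℕ) :
    μ.real {ω | t < f ω} = μ.real {ω | f ω = t + 1} + μ.real {ω | t + 1 < f ω} := by
  have h : {ω | t < f ω} = {ω | f ω = t + 1} ∪ {ω | t + 1 < f ω} := by
    ext ω; simp only [Set.mem_union, Set.mem_ofPred_eq]; omega
  rw [h]
  exact measureReal_union (Set.disjoint_left.2 fun ω h₁ h₂ => by simp_all) (hf measurableSet_Ioi)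

end TailSum

theorem tsum_lt_inv_one_sub_of_lt_mul {b : ℕ → ℝ} {q : ℝ} (hq : q < 1) (hb0 : b 0 = 1)
    (hb : ∀ t, 0 ≤ b t) (hstep : ∀ t, b (t + 1) < q * b t) : ∑' t, b t < (1 - q)⁻¹ := by
  have hq0 : 0 ≤ q := by simpa [hb0] using (hb 1).trans (hstep 0).le
  have hle (t : ℕ) : b t ≤ q ^ t := by
    induction t with
    | zero => simp [hb0]
    | succ t ih => calc
        b (t + 1) ≤ q * b t := (hstep t).le
        _ ≤ q * q ^ t := mul_le_mul_of_nonneg_left ih hq0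
        _ = q ^ (t + 1) := (pow_succ' q t).symm
  calc ∑' t, b t < ∑' t, q ^ t :=
        Summable.tsum_lt_tsum_of_nonneg hb hle (i := 1) (by simpa [hb0] using hstep 0)
          (summable_geometric_of_lt_one hq0 hq)
    _ = (1 - q)⁻¹ := tsum_geometric_of_lt_one hq0 hq

theorem setIntegral_le_setIntegral_inter_nonneg {Ω : Type*} [MeasurableSpace Ω] {μ : Measure Ω}
    {g : Ω → ℝ} (hg : StronglyMeasurable g) (hgi : Integrable g μ) {A B : Set Ω}
    (hB : MeasurableSet B) (hBA : B ⊆ A) :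
    ∫ ω in B, g ω ∂μ ≤ ∫ ω in A ∩ {ω | 0 ≤ g ω}, g ω ∂μ := by
  have h := setIntegral_le_nonneg (μ := μ.restrict A) hB hg hgi.restrict
  rwa [Measure.restrict_restrict hB, Set.inter_eq_left.2 hBA,
    Measure.restrict_restrict (stronglyMeasurable_const.measurableSet_le hg), Set.inter_comm] at h

namespace natFiltration

variable {Ω : Type*} [MeasurableSpace Ω] {ξ : ℕ → Ω → ℝ}

theorem comap_le {s t : ℕ} (hs : s ∈ Set.Icc 1 t) :
    MeasurableSpace.comap (ξ s) inferInstance ≤ natFiltration ξ t :=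
  le_iSup₂ (f := fun u (_ : u ∈ Set.Icc 1 t) => MeasurableSpace.comap (ξ u) inferInstance) s hs

theorem mono (ξ : ℕ → Ω → ℝ) : Monotone (natFiltration ξ) :=
  fun _ _ hst => iSup₂_le fun _ hs => comap_le ⟨hs.1, hs.2.trans hst⟩

theorem le (hmeas : ∀ t, 1 ≤ t → Measurable (ξ t)) (t : ℕ) :
    natFiltration ξ t ≤ ‹MeasurableSpace Ω› :=
  iSup₂_le fun s hs => (hmeas s hs.1).comap_le

theorem measurableSet_lt {T : Ω → ℕ} (hT : ∀ t, MeasurableSet[natFiltration ξ t] {ω | T ω = t})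
    (t : ℕ) : MeasurableSet[natFiltration ξ t] {ω | t < T ω} := by
  have h : {ω | t < T ω} = ⋂ s ∈ Set.Iic t, {ω | T ω = s}ᶜ := by
    ext ω
    simp only [Set.mem_ofPred_eq, Set.mem_iInter, Set.mem_Iic, Set.mem_compl_iff]
    exact ⟨fun h s hs hTs => by omega, fun h => not_le.1 fun hle => h _ hle rfl⟩
  rw [h]
  exact .biInter (Set.to_countable _) fun s hs => (mono ξ hs _ (hT s)).compl

theorem measurable_of_measurableSet_eq (hmeas : ∀ t, 1 ≤ t → Measurable (ξ t)) {T : Ω → ℕ}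
    (hT : ∀ t, MeasurableSet[natFiltration ξ t] {ω | T ω = t}) : Measurable T :=
  measurable_of_Ioi fun t => le hmeas t _ (measurableSet_lt hT t)

theorem indep_comap_succ {P : Measure Ω} (hmeas : ∀ t, 1 ≤ t → Measurable (ξ t))
    (hindep : iIndepFun (fun i : {n : ℕ // 1 ≤ n} => ξ i.1) P) (t : ℕ) :
    Indep (natFiltration ξ t) (MeasurableSpace.comap (ξ (t + 1)) inferInstance) P := by
  let past : Set {n : ℕ // 1 ≤ n} := {i | i.1 ≤ t}
  have h := indep_biSup_compl (fun i => (hmeas i.1 i.2).comap_le) hindep.iIndep past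
  refine indep_of_indep_of_le_right (indep_of_indep_of_le_left h ?_) ?_
  · exact iSup₂_le fun s hs =>
      le_iSup₂ (f := fun (i : {n : ℕ // 1 ≤ n}) (_ : i ∈ past) =>
        MeasurableSpace.comap (ξ i.1) inferInstance) ⟨s, hs.1⟩ hs.2
  · exact le_iSup₂ (f := fun (i : {n : ℕ // 1 ≤ n}) (_ : i ∈ pastᶜ) =>
      MeasurableSpace.comap (ξ i.1) inferInstance) ⟨t + 1, t.succ_pos⟩ (by simp [past])

end natFiltration

theorem forall_mem_Icc_one_succ {p : ℕ → Prop} {t : ℕ} :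
    (∀ s ∈ Set.Icc 1 (t + 1), p s) ↔ (∀ s ∈ Set.Icc 1 t, p s) ∧ p (t + 1) := by
  refine ⟨fun h => ⟨fun s hs => h s ⟨hs.1, hs.2.trans t.le_succ⟩, h _ ⟨t.succ_pos, le_rfl⟩⟩, ?_⟩
  rintro ⟨h, hsucc⟩ s ⟨hs1, hs2⟩
  rcases hs2.lt_or_eq with hs2 | rfl
  exacts [h s ⟨hs1, Nat.lt_succ_iff.1 hs2⟩, hsucc]

section Shewhart

variable {Ω : Type*} {ξ : ℕ → Ω → ℝ} {L : ℝ → ℝ} {ν : ℝ} {ω : Ω} {t : ℕ}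

theorem lt_shewhart_iff :
    t < shewhart ξ L ν ω ↔
      (∀ s ∈ Set.Icc 1 t, L (ξ s ω) < ν) ∧ ∃ s, 1 ≤ s ∧ ν ≤ L (ξ s ω) := by
  constructor
  · intro h
    refine ⟨fun s hs => not_le.1 fun hνs => ?_, ?_⟩
    · exact (Nat.sInf_le ⟨hs.1, hνs⟩ : shewhart ξ L ν ω ≤ s).not_gt (hs.2.trans_lt h)
    · by_contra hnone
      have hzero : shewhart ξ L ν ω = 0 :=
        Nat.sInf_eq_zero.2 (.inr (Set.eq_empty_of_forall_notMem fun s hs => hnone ⟨s, hs⟩))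
      omega
  · rintro ⟨h, hne⟩
    obtain ⟨hone, hνS⟩ : 1 ≤ shewhart ξ L ν ω ∧ ν ≤ L (ξ (shewhart ξ L ν ω) ω) := Nat.sInf_mem hne
    exact not_le.1 fun hle => (h _ ⟨hone, hle⟩).not_ge hνS

theorem shewhart_eq_succ_iff :
    shewhart ξ L ν ω = t + 1 ↔ (∀ s ∈ Set.Icc 1 t, L (ξ s ω) < ν) ∧ ν ≤ L (ξ (t + 1) ω) := by
  rw [Nat.eq_iff_le_and_ge, Nat.succ_le_iff, ← not_lt, lt_shewhart_iff, lt_shewhart_iff,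
    forall_mem_Icc_one_succ]
  constructor
  · rintro ⟨hnot, h, halarm⟩
    exact ⟨h, not_lt.1 fun hlt => hnot ⟨⟨h, hlt⟩, halarm⟩⟩
  · rintro ⟨h, hsucc⟩
    exact ⟨fun H => (H.1.2.trans_le hsucc).false, h, t + 1, t.succ_pos, hsucc⟩

end Shewhart

section IID

variable {Ω : Type*} [MeasurableSpace Ω] {P : Measure Ω} {ξ : ℕ → Ω → ℝ}

theorem setIntegral_inter_preimage_succ (hmeas : ∀ t, 1 ≤ t → Measurable (ξ t))
    (hindep : iIndepFun (fun i : {n : ℕ // 1 ≤ n} => ξ i.1) P)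
    (hident : ∀ t, 1 ≤ t → IdentDistrib (ξ t) (ξ 1) P P) {t : ℕ} {A : Set Ω}
    (hA : MeasurableSet[natFiltration ξ t] A) {D : Set ℝ} (hD : MeasurableSet D) {g : ℝ → ℝ}
    (hg : Measurable g) :
    ∫ ω in A ∩ ξ (t + 1) ⁻¹' D, g (ξ (t + 1) ω) ∂P
      = P.real A * ∫ ω in ξ 1 ⁻¹' D, g (ξ 1 ω) ∂P := by
  have hξ := hmeas (t + 1) t.succ_pos
  calc ∫ ω in A ∩ ξ (t + 1) ⁻¹' D, g (ξ (t + 1) ω) ∂P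
      = ∫ ω in A, D.indicator g (ξ (t + 1) ω) ∂P := by
        rw [← setIntegral_indicator (hξ hD)]
        rfl
    _ = P.real A * ∫ ω, D.indicator g (ξ (t + 1) ω) ∂P :=
        (natFiltration.indep_comap_succ hmeas hindep t).setIntegral_eq_mul
          (natFiltration.le hmeas t) hξ.aemeasurable hA
          (hg.indicator hD).aestronglyMeasurable
    _ = P.real A * ∫ ω in ξ 1 ⁻¹' D, g (ξ 1 ω) ∂P := by
        congr 1
        rw [← integral_indicator (hmeas 1 le_rfl hD)]
        exact ((hident (t + 1) t.succ_pos).comp (hg.indicator hD)).integral_eq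

theorem measureReal_inter_preimage_succ [IsFiniteMeasure P]
    (hmeas : ∀ t, 1 ≤ t → Measurable (ξ t))
    (hindep : iIndepFun (fun i : {n : ℕ // 1 ≤ n} => ξ i.1) P)
    (hident : ∀ t, 1 ≤ t → IdentDistrib (ξ t) (ξ 1) P P) {t : ℕ} {A : Set Ω}
    (hA : MeasurableSet[natFiltration ξ t] A) {D : Set ℝ} (hD : MeasurableSet D) :
    P.real (A ∩ ξ (t + 1) ⁻¹' D) = P.real A * P.real (ξ 1 ⁻¹' D) := by
  simpa using setIntegral_inter_preimage_succ hmeas hindep hident hA hD measurable_const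
    (g := fun _ => (1 : ℝ))

theorem measurableSet_natFiltration_forall_mem_Icc {D : Set ℝ} (hD : MeasurableSet D) (t : ℕ) :
    MeasurableSet[natFiltration ξ t] {ω | ∀ s ∈ Set.Icc 1 t, ξ s ω ∈ D} := by
  have h : {ω | ∀ s ∈ Set.Icc 1 t, ξ s ω ∈ D} = ⋂ s ∈ Set.Icc 1 t, ξ s ⁻¹' D := by
    ext ω; simp
  rw [h]
  exact .biInter (Set.to_countable _) fun s hs => natFiltration.comap_le hs _ ⟨D, hD, rfl⟩

theorem measureReal_forall_mem_Icc [IsProbabilityMeasure P]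
    (hmeas : ∀ t, 1 ≤ t → Measurable (ξ t))
    (hindep : iIndepFun (fun i : {n : ℕ // 1 ≤ n} => ξ i.1) P)
    (hident : ∀ t, 1 ≤ t → IdentDistrib (ξ t) (ξ 1) P P) {D : Set ℝ} (hD : MeasurableSet D)
    (t : ℕ) : P.real {ω | ∀ s ∈ Set.Icc 1 t, ξ s ω ∈ D} = P.real (ξ 1 ⁻¹' D) ^ t := by
  induction t with
  | zero => simp
  | succ t ih =>
    have h : {ω | ∀ s ∈ Set.Icc 1 (t + 1), ξ s ω ∈ D}
        = {ω | ∀ s ∈ Set.Icc 1 t, ξ s ω ∈ D} ∩ ξ (t + 1) ⁻¹' D := by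
      ext ω; exact forall_mem_Icc_one_succ
    rw [h, measureReal_inter_preimage_succ hmeas hindep hident
      (measurableSet_natFiltration_forall_mem_Icc hD t) hD, ih, pow_succ]

theorem setIntegral_eq_succ_sub_le [IsFiniteMeasure P] (hmeas : ∀ t, 1 ≤ t → Measurable (ξ t))
    (hindep : iIndepFun (fun i : {n : ℕ // 1 ≤ n} => ξ i.1) P)
    (hident : ∀ t, 1 ≤ t → IdentDistrib (ξ t) (ξ 1) P P) {L : ℝ → ℝ} (hL : Measurable L)
    (hLint : Integrable (fun ω => L (ξ 1 ω)) P) (ν : ℝ) {T : Ω → ℕ}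
    (hT : ∀ t, MeasurableSet[natFiltration ξ t] {ω | T ω = t}) (t : ℕ) :
    ∫ ω in {ω | T ω = t + 1}, (L (ξ (t + 1) ω) - ν) ∂P
      ≤ P.real {ω | t < T ω} * ∫ ω in {ω | ν ≤ L (ξ 1 ω)}, (L (ξ 1 ω) - ν) ∂P := by
  have hξ := hmeas (t + 1) t.succ_pos
  have hint : Integrable (fun ω => L (ξ (t + 1) ω) - ν) P :=
    (((hident (t + 1) t.succ_pos).comp hL).integrable_iff.2 hLint).sub (integrable_const ν)
  calc ∫ ω in {ω | T ω = t + 1}, (L (ξ (t + 1) ω) - ν) ∂P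
      ≤ ∫ ω in {ω | t < T ω} ∩ {ω | 0 ≤ L (ξ (t + 1) ω) - ν}, (L (ξ (t + 1) ω) - ν) ∂P :=
        setIntegral_le_setIntegral_inter_nonneg
          ((hL.comp hξ).sub measurable_const).stronglyMeasurable hint
          (natFiltration.le hmeas _ _ (hT (t + 1))) fun ω hω => by
            simp only [Set.mem_ofPred_eq] at hω ⊢; omega
    _ = P.real {ω | t < T ω} * ∫ ω in {ω | ν ≤ L (ξ 1 ω)}, (L (ξ 1 ω) - ν) ∂P := by
        simp only [sub_nonneg]
        exact setIntegral_inter_preimage_succ hmeas hindep hident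
          (natFiltration.measurableSet_lt hT t) (measurableSet_le measurable_const hL)
          (hL.sub measurable_const)

theorem measureReal_succ_lt_lt_mul [IsProbabilityMeasure P]
    (hmeas : ∀ t, 1 ≤ t → Measurable (ξ t))
    (hindep : iIndepFun (fun i : {n : ℕ // 1 ≤ n} => ξ i.1) P)
    (hident : ∀ t, 1 ≤ t → IdentDistrib (ξ t) (ξ 1) P P) {L : ℝ → ℝ} (hL : Measurable L)
    (hLint : Integrable (fun ω => L (ξ 1 ω)) P) {ν : ℝ} (hν : 0 < ν) {T : Ω → ℕ}
    (hT : ∀ t, MeasurableSet[natFiltration ξ t] {ω | T ω = t}) (t : ℕ)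
    (h : P.real {ω | t < T ω} * ∫ ω in {ω | ν ≤ L (ξ 1 ω)}, L (ξ 1 ω) ∂P
      < ∫ ω in {ω | T ω = t + 1}, L (ξ (t + 1) ω) ∂P) :
    P.real {ω | t + 1 < T ω} < (1 - P.real {ω | ν ≤ L (ξ 1 ω)}) * P.real {ω | t < T ω} := by
  have hNP := setIntegral_eq_succ_sub_le hmeas hindep hident hL hLint ν hT t
  have hint : Integrable (fun ω => L (ξ (t + 1) ω)) P :=
    ((hident (t + 1) t.succ_pos).comp hL).integrable_iff.2 hLint
  rw [integral_sub hint.integrableOn (integrableOn_const), integral_sub hLint.integrableOn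
    (integrableOn_const), setIntegral_const, setIntegral_const, smul_eq_mul, smul_eq_mul] at hNP
  have hsplit :=
    measureReal_lt_eq_add (μ := P) (natFiltration.measurable_of_measurableSet_eq hmeas hT) t
  nlinarith

theorem integral_lt_inv_of_lt_setIntegral [IsProbabilityMeasure P]
    (hmeas : ∀ t, 1 ≤ t → Measurable (ξ t))
    (hindep : iIndepFun (fun i : {n : ℕ // 1 ≤ n} => ξ i.1) P)
    (hident : ∀ t, 1 ≤ t → IdentDistrib (ξ t) (ξ 1) P P) {L : ℝ → ℝ} (hL : Measurable L)
    (hLint : Integrable (fun ω => L (ξ 1 ω)) P) {ν : ℝ} (hν : 0 < ν)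
    (hp : 0 < P.real {ω | ν ≤ L (ξ 1 ω)}) {T : Ω → ℕ} (hT1 : ∀ ω, 1 ≤ T ω)
    (hT : ∀ t, MeasurableSet[natFiltration ξ t] {ω | T ω = t})
    (h : ∀ t, P.real {ω | t < T ω} * ∫ ω in {ω | ν ≤ L (ξ 1 ω)}, L (ξ 1 ω) ∂P
      < ∫ ω in {ω | T ω = t + 1}, L (ξ (t + 1) ω) ∂P) :
    ∫ ω, (T ω : ℝ) ∂P < (P.real {ω | ν ≤ L (ξ 1 ω)})⁻¹ := by
  rw [integral_natCast_eq_tsum_measureReal (natFiltration.measurable_of_measurableSet_eq hmeas hT),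
    ← sub_sub_cancel 1 (P.real {ω | ν ≤ L (ξ 1 ω)})]
  exact tsum_lt_inv_one_sub_of_lt_mul (by linarith)
    (by simp [Set.eq_univ_of_forall (s := {ω | 0 < T ω}) hT1]) (fun _ => measureReal_nonneg)
    fun t => measureReal_succ_lt_lt_mul hmeas hindep hident hL hLint hν hT t (h t)

theorem measurable_shewhart (hmeas : ∀ t, 1 ≤ t → Measurable (ξ t)) {L : ℝ → ℝ}
    (hL : Measurable L) (ν : ℝ) : Measurable (shewhart ξ L ν) := by
  refine measurable_of_Ioi fun t => ?_
  have h : shewhart ξ L ν ⁻¹' Set.Ioi t = {ω | ∀ s ∈ Set.Icc 1 t, ξ s ω ∈ {x | L x < ν}}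
      ∩ ⋃ s ∈ Set.Ici 1, ξ s ⁻¹' {x | ν ≤ L x} := by
    ext ω; simp [lt_shewhart_iff]
  rw [h]
  exact (natFiltration.le hmeas t _ (measurableSet_natFiltration_forall_mem_Icc
    (measurableSet_lt hL measurable_const) t)).inter
    (.biUnion (Set.to_countable _) fun s hs => hmeas s hs (measurableSet_le measurable_const hL))

theorem measureReal_lt_shewhart [IsProbabilityMeasure P] (hmeas : ∀ t, 1 ≤ t → Measurable (ξ t))
    (hindep : iIndepFun (fun i : {n : ℕ // 1 ≤ n} => ξ i.1) P)
    (hident : ∀ t, 1 ≤ t → IdentDistrib (ξ t) (ξ 1) P P) {L : ℝ → ℝ} (hL : Measurable L)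
    {ν : ℝ} (hq : P.real {ω | L (ξ 1 ω) < ν} < 1) (t : ℕ) :
    P.real {ω | t < shewhart ξ L ν ω} = P.real {ω | L (ξ 1 ω) < ν} ^ t := by
  have hA (u : ℕ) : P.real {ω | ∀ s ∈ Set.Icc 1 u, L (ξ s ω) < ν}
      = P.real {ω | L (ξ 1 ω) < ν} ^ u :=
    measureReal_forall_mem_Icc hmeas hindep hident (measurableSet_lt hL measurable_const) u
  -- the threshold is crossed almost surely, so the junk value `0` of `shewhart` is negligible
  have hnever : P {ω | ∃ s, 1 ≤ s ∧ ν ≤ L (ξ s ω)}ᶜ = 0 := by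
    rw [← measureReal_eq_zero_iff]
    refine le_antisymm (ge_of_tendsto' (tendsto_pow_atTop_nhds_zero_of_lt_one measureReal_nonneg
      hq) fun u => ?_) measureReal_nonneg
    rw [← hA u]
    exact measureReal_mono fun ω hω s hs => not_le.1 fun h => hω ⟨s, hs.1, h⟩
  have h : {ω | t < shewhart ξ L ν ω} = {ω | ∀ s ∈ Set.Icc 1 t, L (ξ s ω) < ν}
      ∩ {ω | ∃ s, 1 ≤ s ∧ ν ≤ L (ξ s ω)} := Set.ext fun ω => lt_shewhart_iff
  rw [h, measureReal_def, measure_inter_conull hnever, ← measureReal_def, hA]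

theorem setIntegral_shewhart_eq_succ [IsProbabilityMeasure P]
    (hmeas : ∀ t, 1 ≤ t → Measurable (ξ t))
    (hindep : iIndepFun (fun i : {n : ℕ // 1 ≤ n} => ξ i.1) P)
    (hident : ∀ t, 1 ≤ t → IdentDistrib (ξ t) (ξ 1) P P) {L : ℝ → ℝ} (hL : Measurable L)
    (ν : ℝ) (t : ℕ) :
    ∫ ω in {ω | shewhart ξ L ν ω = t + 1}, L (ξ (t + 1) ω) ∂P
      = P.real {ω | L (ξ 1 ω) < ν} ^ t * ∫ ω in {ω | ν ≤ L (ξ 1 ω)}, L (ξ 1 ω) ∂P := by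
  have hD : MeasurableSet {x | L x < ν} := measurableSet_lt hL measurable_const
  have h : {ω | shewhart ξ L ν ω = t + 1} = {ω | ∀ s ∈ Set.Icc 1 t, ξ s ω ∈ {x | L x < ν}}
      ∩ ξ (t + 1) ⁻¹' {x | ν ≤ L x} := Set.ext fun ω => shewhart_eq_succ_iff
  rw [h, setIntegral_inter_preimage_succ hmeas hindep hident
    (measurableSet_natFiltration_forall_mem_Icc hD t) (measurableSet_le measurable_const hL) hL,
    measureReal_forall_mem_Icc hmeas hindep hident hD]
  rfl

end IID

/-- Max-min optimality of the Shewhart test: with `(ξ_t)_{t≥1}` i.i.d., `L : ℝ → [0,∞)`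
measurable and integrable at `ξ_1`, `γ > 1`, `ν > 0`, `P(L(ξ_1) ≥ ν) = 1/γ` and
`β = E[L(ξ_1)·1{L(ξ_1) ≥ ν}]`:
(a) every stopping time `T` with `γ ≤ E[T] < ∞` and `P(T > t) > 0` for all `t` satisfies
`inf_t E[L(ξ_{t+1})·1{T = t+1}]/P(T > t) ≤ β`; and
(b) the Shewhart stopping time `S = inf{t ≥ 1 : L(ξ_t) ≥ ν}` satisfies `E[S] = γ` and
`E[L(ξ_{t+1})·1{S = t+1}]/P(S > t) = β` for every `t ≥ 0`. -/
theorem stmt_17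
    {Ω : Type*} [MeasurableSpace Ω] (P : Measure Ω) [IsProbabilityMeasure P]
    (ξ : ℕ → Ω → ℝ)
    (hmeas : ∀ t, 1 ≤ t → Measurable (ξ t))
    (hindep : iIndepFun
      (fun i : {n : ℕ // 1 ≤ n} => ξ i.1) P)
    (hident : ∀ t, 1 ≤ t → IdentDistrib (ξ t) (ξ 1) P P)
    (L : ℝ → ℝ) (hL : Measurable L) (hL0 : ∀ x, 0 ≤ L x)
    (hLint : Integrable (fun ω => L (ξ 1 ω)) P)
    (γ ν : ℝ) (hγ : 1 < γ) (hν : 0 < ν)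
    (hthresh : P {ω | ν ≤ L (ξ 1 ω)} = ENNReal.ofReal (1 / γ))
    (β : ℝ) (hβ : β = ∫ ω in {ω | ν ≤ L (ξ 1 ω)}, L (ξ 1 ω) ∂P) :
    (∀ T : Ω → ℕ, (∀ ω, 1 ≤ T ω) →
      (∀ t, MeasurableSet[natFiltration ξ t] {ω | T ω = t}) →
      Integrable (fun ω => (T ω : ℝ)) P →
      γ ≤ ∫ ω, (T ω : ℝ) ∂P →
      (∀ t : ℕ, 0 < P {ω | t < T ω}) →
      ⨅ t : ℕ, (∫ ω in {ω | T ω = t + 1}, L (ξ (t + 1) ω) ∂P)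
          / (P {ω | t < T ω}).toReal ≤ β)
    ∧ (∫ ω, (shewhart ξ L ν ω : ℝ) ∂P = γ
    ∧ ∀ t : ℕ,
        (∫ ω in {ω | shewhart ξ L ν ω = t + 1}, L (ξ (t + 1) ω) ∂P)
          / (P {ω | t < shewhart ξ L ν ω}).toReal = β) := by
  have hγinv : 0 < γ⁻¹ ∧ γ⁻¹ < 1 := ⟨inv_pos.2 (one_pos.trans hγ), inv_lt_one_of_one_lt₀ hγ⟩
  have hp : P.real {ω | ν ≤ L (ξ 1 ω)} = γ⁻¹ := by
    rw [measureReal_def, hthresh, one_div, ENNReal.toReal_ofReal hγinv.1.le]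
  have hq : P.real {ω | L (ξ 1 ω) < ν} = 1 - γ⁻¹ := by
    rw [← hp, ← probReal_compl_eq_one_sub (s := {ω | ν ≤ L (ξ 1 ω)})
      (hmeas 1 le_rfl (measurableSet_le measurable_const hL))]
    simp only [Set.compl_ofPred, not_le]
  refine ⟨fun T hT1 hT _ hET hpos => ?_, ?_, fun t => ?_⟩
  · by_contra! hlt
    have hbdd : BddBelow (Set.range fun t : ℕ =>
        (∫ ω in {ω | T ω = t + 1}, L (ξ (t + 1) ω) ∂P) / (P {ω | t < T ω}).toReal) :=
      ⟨0, Set.forall_mem_range.2 fun t => div_nonneg (setIntegral_nonneg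
        (natFiltration.le hmeas _ _ (hT _)) fun ω _ => hL0 _) ENNReal.toReal_nonneg⟩
    refine (hET.trans_lt ?_).false
    rw [← inv_inv γ, ← hp]
    refine integral_lt_inv_of_lt_setIntegral hmeas hindep hident hL hLint hν (hp ▸ hγinv.1) hT1 hT
      fun t => ?_
    rw [← hβ, mul_comm]
    exact (lt_div_iff₀ (ENNReal.toReal_pos (hpos t).ne' (measure_ne_top P _))).1
      (hlt.trans_le (ciInf_le hbdd t))
  · rw [integral_natCast_eq_tsum_measureReal (measurable_shewhart hmeas hL ν)]
    simp_rw [measureReal_lt_shewhart hmeas hindep hident hL (by linarith), hq]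
    rw [tsum_geometric_of_lt_one (by linarith) (by linarith), sub_sub_cancel, inv_inv]
  · rw [setIntegral_shewhart_eq_succ hmeas hindep hident hL, ← measureReal_def,
      measureReal_lt_shewhart hmeas hindep hident hL (by linarith), hq, ← hβ]
    exact mul_div_cancel_left₀ β (pow_pos (sub_pos.2 hγinv.2) t).ne'
end
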